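/- Let M be a matroid, M = M⁺ \ e and M' = M⁺ / e for some matroid M⁺ and element e, and let C ⊆ E(M). If λ_{M'}(C) < λ_M(C), then e ∈ cl_{M⁺}(C), where cl denotes matroid closure and λ the connectivity function. -/

import Mathlib

open Set

namespace MatroidDepth

variable {α : Type*}

/-- The (finite) rank of a set in a matroid. -/
noncomputable def rk (M : Matroid α) (X : Set α) : ℕ :=
  sSup {n | ∃ I, M.Indep I ∧ I ⊆ X ∧ I.ncard = n}

/-- The rank of a matroid. -/
noncomputable def rank (M : Matroid α) : ℕ := rk M M.E

/-- Deletion of a set of elements. -/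
def del (M : Matroid α) (D : Set α) : Matroid α := M.restrict (M.E \ D)

/-- Contraction of a set of elements, as the dual of deletion. -/
def con (M : Matroid α) (C : Set α) : Matroid α := (del M.dual C).dual

/-- The connectivity function `λ_M`. -/
noncomputable def lam (M : Matroid α) (X : Set α) : ℤ :=
  (rk M X : ℤ) + (rk M (M.E \ X) : ℤ) - (rank M : ℤ)

/-- A circuit: a minimal dependent set. -/
def Circuit (M : Matroid α) (C : Set α) : Prop :=
  C ⊆ M.E ∧ ¬ M.Indep C ∧ ∀ D, D ⊂ C → M.Indep D

/-- Two elements connected: equal, or on a common circuit. -/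
def ConnTo (M : Matroid α) (e f : α) : Prop :=
  (e = f ∧ e ∈ M.E) ∨ ∃ C, Circuit M C ∧ e ∈ C ∧ f ∈ C

/-- A matroid is connected. -/
def Conn (M : Matroid α) : Prop :=
  M.E.Nonempty ∧ ∀ e ∈ M.E, ∀ f ∈ M.E, ConnTo M e f

/-- `A` is (the ground set of) a component of `M`: a maximal mutually-connected set. -/
def IsComponent (M : Matroid α) (A : Set α) : Prop :=
  A ⊆ M.E ∧ A.Nonempty ∧ (∀ e ∈ A, ∀ f ∈ A, ConnTo M e f) ∧
    ∀ B, A ⊆ B → B ⊆ M.E → (∀ e ∈ B, ∀ f ∈ B, ConnTo M e f) → B ⊆ A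

/-- A loop. -/
def IsLoop (M : Matroid α) (e : α) : Prop := e ∈ M.E ∧ ¬ M.Indep {e}

/-- A coloop: an element in every base. -/
def IsColoop (M : Matroid α) (e : α) : Prop := e ∈ M.E ∧ ∀ B, M.IsBase B → e ∈ B

/-- Generic recursive depth: `DepthLE step M n` says the `step`-depth of `M` is at most `n`. -/
inductive DepthLE {α : Type*} (step : Matroid α → Matroid α → Prop) : Matroid α → ℕ → Prop
  | base (M : Matroid α) (n : ℕ) : M.E.Subsingleton → 1 ≤ n → DepthLE step M n
  | comps (M : Matroid α) (n : ℕ) : ¬ Conn M → ¬ M.E.Subsingleton →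
      (∀ A, IsComponent M A → DepthLE step (M.restrict A) n) → DepthLE step M n
  | step (M M' : Matroid α) (n : ℕ) : Conn M → ¬ M.E.Subsingleton →
      step M M' → M' ≠ M → DepthLE step M' n → DepthLE step M (n + 1)

/-- The depth associated with a transformation relation `step`. -/
noncomputable def depth (step : Matroid α → Matroid α → Prop) (M : Matroid α) : ℕ :=
  sInf {n | DepthLE step M n}

/-- c-transformation: contraction of one element. -/
def cStep (M M' : Matroid α) : Prop := ∃ e ∈ M.E, M' = con M {e}

/-- d-transformation: deletion of one element. -/
def dStep (M M' : Matroid α) : Prop := ∃ e ∈ M.E, M' = del M {e}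

/-- cd-transformation. -/
def cdStep (M M' : Matroid α) : Prop := cStep M M' ∨ dStep M M'

/-- c*-transformation: extend by an element and contract it. -/
def csStep (M M' : Matroid α) : Prop :=
  ∃ (N : Matroid α) (f : α), M = del N {f} ∧ M' = con N {f}

/-- Contraction-depth. -/
noncomputable def cd (M : Matroid α) : ℕ := depth cStep M

/-- Deletion-depth. -/
noncomputable def dd (M : Matroid α) : ℕ := depth dStep M

/-- Contraction-deletion-depth. -/
noncomputable def cdd (M : Matroid α) : ℕ := depth cdStep M

/-- c*-depth. -/
noncomputable def csd (M : Matroid α) : ℕ := depth csStep M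

/-- The function ω from the paper. -/
noncomputable def omega (M : Matroid α) {k : ℕ} (X : Fin k → Set α) : ℤ :=
  (∑ i, (rk M (M.E \ X i) : ℤ)) - ((k : ℤ) - 1) * (rank M : ℤ)



lemma rk_eq_of {M : Matroid α} {X I : Set α} (hI : M.Indep I) (hIX : I ⊆ X)
    (hmax : ∀ J, M.Indep J → J ⊆ X → J.ncard ≤ I.ncard) : rk M X = I.ncard := by
  have hbdd : I.ncard ∈ upperBounds {n | ∃ J, M.Indep J ∧ J ⊆ X ∧ J.ncard = n} := by
    rintro n ⟨J, hJ, hJX, rfl⟩; exact hmax J hJ hJX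
  refine le_antisymm (csSup_le ⟨I.ncard, I, hI, hIX, rfl⟩ hbdd)
    (le_csSup ⟨I.ncard, hbdd⟩ ⟨I, hI, hIX, rfl⟩)

lemma ncard_le_ncard_basis' {M : Matroid α} [M.Finite] {X I J : Set α} (hI : M.IsBasis' I X)
    (hJ : M.Indep J) (hJX : J ⊆ X) : J.ncard ≤ I.ncard := by
  obtain ⟨J', hJ', hJJ'⟩ := hJ.subset_isBasis'_of_subset hJX
  have h1 : (M.restrict X).IsBase I := Matroid.isBase_restrict_iff'.2 hI
  have h2 : (M.restrict X).IsBase J' := Matroid.isBase_restrict_iff'.2 hJ'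
  calc J.ncard ≤ J'.ncard :=
        Set.ncard_le_ncard hJJ' (M.set_finite J' hJ'.indep.subset_ground)
    _ = I.ncard := h2.ncard_eq_ncard_of_isBase h1

lemma rk_basis' {M : Matroid α} [M.Finite] {X I : Set α} (hI : M.IsBasis' I X) :
    rk M X = I.ncard :=
  rk_eq_of hI.indep hI.subset fun J hJ hJX => ncard_le_ncard_basis' hI hJ hJX

lemma rk_empty (M : Matroid α) : rk M ∅ = 0 := by
  have := rk_eq_of (M := M) (X := ∅) M.empty_indep Subset.rfl
    (fun J _ hJX => by simp [subset_empty_iff.1 hJX])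
  simpa using this

lemma rk_restrict (M : Matroid α) (R X : Set α) : rk (M.restrict R) X = rk M (X ∩ R) := by
  unfold rk
  congr 1
  ext n
  constructor
  · rintro ⟨I, hI, hIX, rfl⟩
    rw [Matroid.restrict_indep_iff] at hI
    exact ⟨I, hI.1, subset_inter hIX hI.2, rfl⟩
  · rintro ⟨I, hI, hIX, rfl⟩
    exact ⟨I, Matroid.restrict_indep_iff.2 ⟨hI, hIX.trans inter_subset_right⟩,
      hIX.trans inter_subset_left, rfl⟩

lemma rk_insert_mem {M : Matroid α} [M.Finite] {e : α} {X : Set α} (he : e ∈ M.closure X) :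
    rk M (insert e X) = rk M X := by
  obtain ⟨I, hI⟩ := M.exists_isBasis' X
  have hI' : M.IsBasis' I (insert e X) := by
    rw [Matroid.isBasis'_iff_isBasis_closure] at hI ⊢
    rw [Matroid.closure_insert_eq_of_mem_closure he]
    exact ⟨hI.1, hI.2.trans (subset_insert _ _)⟩
  rw [rk_basis' hI', rk_basis' hI]

lemma rk_insert_not_mem {M : Matroid α} [M.Finite] {e : α} {X : Set α} (heE : e ∈ M.E)
    (he : e ∉ M.closure X) : rk M (insert e X) = rk M X + 1 := by
  obtain ⟨I, hI⟩ := M.exists_isBasis' X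
  have hclI : e ∉ M.closure I := by rw [hI.closure_eq_closure]; exact he
  have heI : e ∉ I := fun h => hclI (M.subset_closure I hI.indep.subset_ground h)
  have hins : M.Indep (insert e I) := by
    rw [hI.indep.insert_indep_iff_of_notMem heI]; exact ⟨heE, hclI⟩
  have hfin : I.Finite := M.set_finite I hI.indep.subset_ground
  have hcard : (insert e I).ncard = I.ncard + 1 := Set.ncard_insert_of_notMem heI hfin
  rw [rk_basis' hI, ← hcard]
  refine rk_eq_of hins (insert_subset_insert hI.subset) (fun J hJ hJX => ?_)
  rw [hcard]
  have hJfin : J.Finite := M.set_finite J hJ.subset_ground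
  have h1 : (J \ {e}).ncard ≤ I.ncard := by
    refine ncard_le_ncard_basis' hI (hJ.subset diff_subset) ?_
    intro x hx
    rcases hJX hx.1 with h | h
    · exact absurd h hx.2
    · exact h
  calc J.ncard ≤ (insert e (J \ {e})).ncard := by
        refine Set.ncard_le_ncard (fun x hx => ?_) (hJfin.diff.insert e)
        by_cases hxe : x = e
        · exact Or.inl hxe
        · exact Or.inr ⟨hx, hxe⟩
    _ ≤ (J \ {e}).ncard + 1 := Set.ncard_insert_le _ _
    _ ≤ I.ncard + 1 := by omega

lemma rank_base {M : Matroid α} [M.Finite] {B : Set α} (hB : M.IsBase B) : rank M = B.ncard :=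
  rk_basis' hB.isBasis_ground.isBasis'

lemma rk_dual {M : Matroid α} [M.Finite] {X : Set α} (hX : X ⊆ M.E) :
    rk M.dual X + rank M = X.ncard + rk M (M.E \ X) := by
  obtain ⟨I, hI⟩ := M.exists_isBasis (M.E \ X) diff_subset
  obtain ⟨B, hB, hIB⟩ := hI.exists_isBase
  have hXfin : X.Finite := M.set_finite X hX
  have hBfin : B.Finite := M.set_finite B hB.subset_ground
  have hIB' : I = B \ X := by
    rw [hIB]; ext x; simp only [mem_inter_iff, mem_diff]
    exact ⟨fun h => ⟨h.1, h.2.2⟩, fun h => ⟨h.1, hB.subset_ground h.1, h.2⟩⟩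
  have key : rk M.dual X = (X \ B).ncard := by
    refine rk_eq_of ?_ diff_subset (fun J hJ hJX => ?_)
    · rw [Matroid.dual_indep_iff_exists (diff_subset.trans hX)]
      exact ⟨B, hB, disjoint_sdiff_left⟩
    · obtain ⟨hJE, B', hB', hdisj⟩ := Matroid.dual_indep_iff_exists'.1 hJ
      have hB'fin : B'.Finite := M.set_finite B' hB'.subset_ground
      have h1 : (B' \ X).ncard ≤ I.ncard := by
        refine ncard_le_ncard_basis' hI.isBasis' (hB'.indep.diff X) ?_
        exact fun x hx => ⟨hB'.subset_ground hx.1, hx.2⟩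
      have h2 : (B' \ X).ncard + (B' ∩ X).ncard = B'.ncard := by
        have := Set.ncard_diff_add_ncard_of_subset (inter_subset_left (s := B') (t := X)) hB'fin
        rwa [diff_self_inter] at this
      have h3 : (B \ X).ncard + (B ∩ X).ncard = B.ncard := by
        have := Set.ncard_diff_add_ncard_of_subset (inter_subset_left (s := B) (t := X)) hBfin
        rwa [diff_self_inter] at this
      have h4 : (X \ B').ncard + (X ∩ B').ncard = X.ncard := by
        have := Set.ncard_diff_add_ncard_of_subset (inter_subset_left (s := X) (t := B')) hXfin
        rwa [diff_self_inter] at this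
      have h5 : (X \ B).ncard + (X ∩ B).ncard = X.ncard := by
        have := Set.ncard_diff_add_ncard_of_subset (inter_subset_left (s := X) (t := B)) hXfin
        rwa [diff_self_inter] at this
      have h6 : B.ncard = B'.ncard := hB.ncard_eq_ncard_of_isBase hB'
      have h7 : J.ncard ≤ (X \ B').ncard :=
        Set.ncard_le_ncard (fun x hx => ⟨hJX hx, fun hxB => hdisj.ne_of_mem hx hxB rfl⟩)
          hXfin.diff
      have h8 : (B \ X).ncard = I.ncard := by rw [hIB']
      have h9 : (X ∩ B').ncard = (B' ∩ X).ncard := by rw [inter_comm]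
      have h10 : (X ∩ B).ncard = (B ∩ X).ncard := by rw [inter_comm]
      omega
  have hrkI : rk M (M.E \ X) = I.ncard := rk_basis' hI.isBasis'
  have hrank : rank M = B.ncard := rank_base hB
  have h3 : (B \ X).ncard + (B ∩ X).ncard = B.ncard := by
    have := Set.ncard_diff_add_ncard_of_subset (inter_subset_left (s := B) (t := X)) hBfin
    rwa [diff_self_inter] at this
  have h5 : (X \ B).ncard + (X ∩ B).ncard = X.ncard := by
    have := Set.ncard_diff_add_ncard_of_subset (inter_subset_left (s := X) (t := B)) hXfin
    rwa [diff_self_inter] at this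
  have h8 : (B \ X).ncard = I.ncard := by rw [hIB']
  have h10 : (X ∩ B).ncard = (B ∩ X).ncard := by rw [inter_comm]
  omega

theorem stmt5 {α : Type*} (M M' Mp : Matroid α) [Mp.Finite] (e : α) (he : e ∈ Mp.E)
    (hM : M = del Mp {e}) (hM' : M' = con Mp {e})
    (C : Set α) (hC : C ⊆ M.E)
    (h : lam M' C < lam M C) : e ∈ Mp.closure C := by
  classical
  by_contra hcl
  haveI hdualfin : Mp.dual.Finite := ⟨Mp.ground_finite⟩
  have hEfin : Mp.E.Finite := Mp.ground_finite
  have hME : M.E = Mp.E \ {e} := by rw [hM]; rfl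
  have hC' : C ⊆ Mp.E \ {e} := hME ▸ hC
  have hCE : C ⊆ Mp.E := hC'.trans diff_subset
  have heC : e ∉ C := fun hh => (hC' hh).2 rfl
  set D : Set α := (Mp.E \ {e}) \ C with hD
  have hDE' : D ⊆ Mp.E \ {e} := diff_subset
  have hDE : D ⊆ Mp.E := hDE'.trans diff_subset
  set N : Matroid α := del Mp.dual {e} with hN
  have hNr : N = Mp.dual.restrict (Mp.E \ {e}) := rfl
  haveI hNfin : N.Finite := by
    rw [hNr]; exact Matroid.restrict_finite (hEfin.diff : (Mp.E \ {e}).Finite)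
  have hM'N : M' = N.dual := hM'
  -- set identities
  have id4 : (Mp.E \ {e}) \ D = C := by
    ext x; simp only [hD, mem_diff]
    constructor
    · rintro ⟨hx, hx2⟩
      by_contra hxC
      exact hx2 ⟨hx, hxC⟩
    · exact fun hx => ⟨hC' hx, fun hh => hh.2 hx⟩
  have id5 : Mp.E \ D = insert e C := by
    ext x; simp only [hD, mem_diff, mem_insert_iff, mem_singleton_iff]
    constructor
    · rintro ⟨hx, hx2⟩
      by_cases hxe : x = e
      · exact Or.inl hxe
      · by_contra hh
        push_neg at hh
        exact hx2 ⟨⟨hx, hxe⟩, hh.2⟩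
    · rintro (rfl | hx)
      · exact ⟨he, fun hh => hh.1.2 rfl⟩
      · exact ⟨hCE hx, fun hh => hh.2 hx⟩
  have id6 : Mp.E \ C = insert e D := by
    ext x; simp only [hD, mem_diff, mem_insert_iff, mem_singleton_iff]
    constructor
    · rintro ⟨hx, hx2⟩
      by_cases hxe : x = e
      · exact Or.inl hxe
      · exact Or.inr ⟨⟨hx, hxe⟩, hx2⟩
    · rintro (rfl | hx)
      · exact ⟨he, heC⟩
      · exact ⟨hx.1.1, hx.2⟩
  have id7 : Mp.E \ (Mp.E \ {e}) = {e} := by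
    rw [diff_diff_cancel_left (singleton_subset_iff.2 he)]
  have id8 : insert e (Mp.E \ {e}) = Mp.E := by
    rw [insert_diff_singleton, insert_eq_of_mem he]
  have cnt : D.ncard + C.ncard = (Mp.E \ {e}).ncard :=
    Set.ncard_diff_add_ncard_of_subset hC' (hEfin.diff : (Mp.E \ {e}).Finite)
  -- abbreviations
  set a := rk Mp C with ha
  set b := rk Mp D with hb
  set a' := rk Mp (insert e C) with ha'
  set b' := rk Mp (insert e D) with hb'
  set r := rank Mp with hr
  set r0 := rk Mp (Mp.E \ {e}) with hr0
  set t := rk Mp {e} with ht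
  -- lam M C
  have hMC : lam M C = (a : ℤ) + b - r0 := by
    rw [hM]
    show (rk (Mp.restrict (Mp.E \ {e})) C : ℤ) +
      (rk (Mp.restrict (Mp.E \ {e})) ((Mp.restrict (Mp.E \ {e})).E \ C) : ℤ) -
      (rk (Mp.restrict (Mp.E \ {e})) (Mp.restrict (Mp.E \ {e})).E : ℤ) = _
    rw [Matroid.restrict_ground_eq, rk_restrict, rk_restrict, rk_restrict,
      inter_eq_self_of_subset_left hC', inter_eq_self_of_subset_left hDE',
      inter_self]
  -- rk N identities
  have hrkN : ∀ X : Set α, X ⊆ Mp.E \ {e} → rk N X = rk Mp.dual X := by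
    intro X hX
    rw [hNr, rk_restrict, inter_eq_self_of_subset_left hX]
  have hNE : N.E = Mp.E \ {e} := rfl
  have hrankN : rank N = rk Mp.dual (Mp.E \ {e}) := by
    show rk N N.E = _
    rw [hNE, hrkN _ Subset.rfl]
  -- dual rank equations for Mp
  have E2 : rk Mp.dual D + r = D.ncard + a' := by
    have := rk_dual (M := Mp) hDE
    rwa [id5] at this
  have E4 : rk Mp.dual C + r = C.ncard + b' := by
    have := rk_dual (M := Mp) hCE
    rwa [id6] at this
  have E6 : rk Mp.dual (Mp.E \ {e}) + r = (Mp.E \ {e}).ncard + t := by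
    have := rk_dual (M := Mp) (diff_subset (s := Mp.E) (t := {e}))
    rwa [id7] at this
  -- dual rank equations for N
  have E1 : rk N.dual C + rank N = C.ncard + rk Mp.dual D := by
    have h1 := rk_dual (M := N) (X := C) hC'
    rwa [hNE, hrkN D hDE'] at h1
  have E3 : rk N.dual D + rank N = D.ncard + rk Mp.dual C := by
    have h1 := rk_dual (M := N) (X := D) hDE'
    rwa [hNE, id4, hrkN C hC'] at h1
  have E5 : rk N.dual (Mp.E \ {e}) + rank N = (Mp.E \ {e}).ncard := by
    have h1 := rk_dual (M := N) (X := Mp.E \ {e}) (by rw [hNE])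
    rwa [hNE, diff_self, hNr, rk_restrict, empty_inter, rk_empty, add_zero] at h1
  -- lam M' C
  have hM'C : lam M' C = (rk N.dual C : ℤ) + (rk N.dual D : ℤ) - (rk N.dual (Mp.E \ {e}) : ℤ) := by
    rw [hM'N]
    show (rk N.dual C : ℤ) + (rk N.dual (N.dual.E \ C) : ℤ) - (rk N.dual N.dual.E : ℤ) = _
    have hNdE : N.dual.E = Mp.E \ {e} := rfl
    rw [hNdE]
  -- consequences of e ∉ closure C
  have ha'1 : a' = a + 1 := rk_insert_not_mem he hcl
  have hesing : Mp.Indep {e} := by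
    obtain ⟨I, hI⟩ := Mp.exists_isBasis' C
    have hclI : e ∉ Mp.closure I := by rw [hI.closure_eq_closure]; exact hcl
    have heI : e ∉ I := fun hh => heC (hI.subset hh)
    have hins : Mp.Indep (insert e I) := by
      rw [hI.indep.insert_indep_iff_of_notMem heI]; exact ⟨he, hclI⟩
    exact hins.subset (singleton_subset_iff.2 (mem_insert _ _))
  have ht1 : t = 1 := by
    rw [ht]
    have := rk_eq_of (M := Mp) (X := {e}) (I := {e}) hesing Subset.rfl
      (fun J _ hJX => by
        simpa using Set.ncard_le_ncard hJX (finite_singleton e))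
    rw [this, Set.ncard_singleton]
  -- key inequality b' + r0 ≥ b + r
  have hkey : b + r ≤ b' + r0 := by
    by_cases hD1 : e ∈ Mp.closure D
    · have hb'b : b' = b := rk_insert_mem hD1
      have hE1 : e ∈ Mp.closure (Mp.E \ {e}) :=
        Mp.closure_subset_closure hDE' hD1
      have hrr0 : r = r0 := by
        rw [hr, rank, ← id8, rk_insert_mem hE1, hr0]
      omega
    · have hb'b : b' = b + 1 := rk_insert_not_mem he hD1
      by_cases hE1 : e ∈ Mp.closure (Mp.E \ {e})
      · have hrr0 : r = r0 := by
          rw [hr, rank, ← id8, rk_insert_mem hE1, hr0]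
        omega
      · have hrr0 : r = r0 + 1 := by
          rw [hr, rank, ← id8, rk_insert_not_mem he hE1, hr0]
        omega
  rw [hMC, hM'C] at h
  omega

end MatroidDepth
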